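/- Let k be a field of characteristic 0, let α, β ∈ k, and let A = A(α,β) be the down-up algebra, i.e. the quotient of the free (noncommutative) k-algebra on two generators x, y by the two-sided ideal generated by the elements x²y − βyx² − αxyx and xy² − βy²x − αyxy. For i ≥ 1 define a_i, b_i ∈ k by (a_i, b_i)ᵀ = M^{i−1}(1,0)ᵀ, where M is the 2×2 matrix with rows (α, 1) and (β, 0). Then for every i ≥ 1 the equality x^i y = b_i · y x^i + a_i · x y x^{i−1} holds in A. -/

import Mathlib

open Matrix

/-- The generator `x` of the free algebra on two generators. -/
noncomputable def genX (k : Type*) [Field k] : FreeAlgebra k (Fin 2) :=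
  FreeAlgebra.ι k 0

/-- The generator `y` of the free algebra on two generators. -/
noncomputable def genY (k : Type*) [Field k] : FreeAlgebra k (Fin 2) :=
  FreeAlgebra.ι k 1

/-- The defining relations of the down-up algebra `A(α, β)`:
`x²y = βyx² + αxyx` and `xy² = βy²x + αyxy`.  The quotient `RingQuot (downUpRel k α β)`
is precisely the quotient of the free algebra by the two-sided ideal generated by
`x²y − βyx² − αxyx` and `xy² − βy²x − αyxy`. -/
inductive downUpRel (k : Type*) [Field k] (α β : k) :
    FreeAlgebra k (Fin 2) → FreeAlgebra k (Fin 2) → Prop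
  | rel1 : downUpRel k α β (genX k ^ 2 * genY k)
      (β • (genY k * genX k ^ 2) + α • (genX k * genY k * genX k))
  | rel2 : downUpRel k α β (genX k * genY k ^ 2)
      (β • (genY k ^ 2 * genX k) + α • (genY k * genX k * genY k))

/-- The down-up algebra `A(α, β)`. -/
noncomputable def DownUpAlgebra (k : Type*) [Field k] (α β : k) :=
  RingQuot (downUpRel k α β)

/-- The 2×2 matrix with rows `(α, 1)` and `(β, 0)`. -/
noncomputable def duMat {k : Type*} [Field k] (α β : k) : Matrix (Fin 2) (Fin 2) k :=
  !![α, 1; β, 0]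

/-- `a_i` defined by `(a_i, b_i)ᵀ = M^(i−1) (1,0)ᵀ`. -/
noncomputable def duA {k : Type*} [Field k] (α β : k) (i : ℕ) : k :=
  ((duMat α β) ^ (i - 1)).mulVec ![1, 0] 0

/-- `b_i` defined by `(a_i, b_i)ᵀ = M^(i−1) (1,0)ᵀ`. -/
noncomputable def duB {k : Type*} [Field k] (α β : k) (i : ℕ) : k :=
  ((duMat α β) ^ (i - 1)).mulVec ![1, 0] 1


lemma duA_succ {k : Type*} [Field k] (α β : k) (n : ℕ) (hn : 1 ≤ n) :
    duA α β (n + 1) = α * duA α β n + duB α β n := by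
  have h : n + 1 - 1 = (n - 1) + 1 := by omega
  unfold duA duB
  rw [h, pow_succ', ← Matrix.mulVec_mulVec]
  simp [duMat, Matrix.mulVec, dotProduct, Fin.sum_univ_two]

lemma duB_succ {k : Type*} [Field k] (α β : k) (n : ℕ) (hn : 1 ≤ n) :
    duB α β (n + 1) = β * duA α β n := by
  have h : n + 1 - 1 = (n - 1) + 1 := by omega
  unfold duA duB
  rw [h, pow_succ', ← Matrix.mulVec_mulVec]
  simp [duMat, Matrix.mulVec, dotProduct, Fin.sum_univ_two]

/-- In the down-up algebra `A(α, β)`, for every `i ≥ 1` one has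
`x^i y = b_i · y x^i + a_i · x y x^(i−1)`. -/
theorem downUp_xiy {k : Type*} [Field k] [CharZero k] (α β : k) (i : ℕ) (hi : 1 ≤ i) :
    (RingQuot.mkAlgHom k (downUpRel k α β)) (genX k ^ i * genY k) =
      duB α β i • (RingQuot.mkAlgHom k (downUpRel k α β)) (genY k * genX k ^ i) +
      duA α β i • (RingQuot.mkAlgHom k (downUpRel k α β)) (genX k * genY k * genX k ^ (i - 1)) := by
  induction i, hi using Nat.le_induction with
  | base =>
    simp [duA, duB, duMat, Matrix.mulVec, dotProduct, pow_one]
  | succ n hn ih =>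
    set φ := RingQuot.mkAlgHom k (downUpRel k α β) with hφ
    have hrel : φ (genX k ^ 2 * genY k) =
        β • φ (genY k * genX k ^ 2) + α • φ (genX k * genY k * genX k) := by
      rw [RingQuot.mkAlgHom_rel k (downUpRel.rel1 (α := α) (β := β))]
      simp [hφ]
    have hn1 : n - 1 + 1 = n := by omega
    have key : φ (genX k ^ 2 * genY k * genX k ^ (n - 1)) =
        β • φ (genY k * genX k ^ (n + 1)) + α • φ (genX k * genY k * genX k ^ n) := by
      rw [_root_.map_mul, hrel, add_mul, smul_mul_assoc, smul_mul_assoc,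
        ← _root_.map_mul, ← _root_.map_mul]
      congr 2
      · have h2 : 2 + (n - 1) = n + 1 := by omega
        rw [mul_assoc, ← pow_add, h2]
      · rw [mul_assoc, ← pow_succ', hn1]
    have hx2 : genX k ^ (n + 1) * genY k = genX k * (genX k ^ n * genY k) := by
      rw [pow_succ', mul_assoc]
    have hs : genX k * (genX k * genY k * genX k ^ (n - 1)) =
        genX k ^ 2 * genY k * genX k ^ (n - 1) := by
      noncomm_ring [pow_two]
    have hs2 : genX k * (genY k * genX k ^ n) = genX k * genY k * genX k ^ n :=
      (mul_assoc _ _ _).symm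
    rw [hx2, _root_.map_mul, ih, mul_add, mul_smul_comm, mul_smul_comm,
      ← _root_.map_mul, ← _root_.map_mul, hs, hs2, key,
      duA_succ α β n hn, duB_succ α β n hn, Nat.add_sub_cancel]
    module
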